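/- For a simple random walk S and every n ≥ 0, the σ-fields σ(T^n(S)) and σ(S_k, k ≤ n) are independent. In particular, the random variables S_1, T(S)_1, T^2(S)_1, …, T^{n-1}(S)_1, together with the process T^n(S), are mutually independent. -/

import Mathlib

open MeasureTheory ProbabilityTheory Filter

noncomputable section

/-- Increment `X_i = S_i - S_{i-1}` of a walk. -/
def inc (S : ℕ → ℤ) (i : ℕ) : ℤ := S i - S (i - 1)

/-- The times `τ_l` of the Csáki–Vincze construction. -/
def cvTau (S : ℕ → ℤ) : ℕ → ℕ
  | 0 => 0
  | l + 1 => sInf {i | cvTau S l < i ∧ S (i - 1) * S (i + 1) < 0}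

/-- The index `l` such that `τ_l + 1 ≤ j ≤ τ_{l+1}`, i.e. the number of
sign-change times strictly before `j`. -/
def cvEll (S : ℕ → ℤ) (j : ℕ) : ℕ :=
  ((Finset.range j).filter fun i => 0 < i ∧ S (i - 1) * S (i + 1) < 0).card

/-- The increments `X̄_j = (-1)^l X_1 X_{j+1}`, `τ_l + 1 ≤ j ≤ τ_{l+1}`. -/
def cvBarX (S : ℕ → ℤ) (j : ℕ) : ℤ := (-1) ^ cvEll S j * inc S 1 * inc S (j + 1)

/-- The Csáki–Vincze transform `T(S)_n = X̄_1 + ⋯ + X̄_n`. -/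
def CV (S : ℕ → ℤ) (n : ℕ) : ℤ := ∑ j ∈ Finset.range n, cvBarX S (j + 1)

/-- Iterates of the Csáki–Vincze transform. -/
def CViter : ℕ → (ℕ → ℤ) → ℕ → ℤ
  | 0, S => S
  | h + 1, S => CV (CViter h S)

/-- `S` is a simple random walk: `S_0 = 0` and the increments are
i.i.d. uniform on `{-1, 1}`. -/
def IsSRW {Ω : Type*} [MeasurableSpace Ω] (P : Measure Ω) (S : Ω → ℕ → ℤ) : Prop :=
  (∀ ω, S ω 0 = 0) ∧
  (∀ ω i, S ω (i + 1) - S ω i = 1 ∨ S ω (i + 1) - S ω i = -1) ∧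
  (∀ i, Measurable fun ω => S ω i) ∧
  iIndepFun (fun i ω => S ω (i + 1) - S ω i) P ∧
  (∀ i, P {ω | S ω (i + 1) - S ω i = 1} = 1 / 2) ∧
  (∀ i, P {ω | S ω (i + 1) - S ω i = -1} = 1 / 2)

/-!
Write `ξ_k = S_{k+1} - S_k`. For `k ≥ 1` the step `X̄_k` of `T(S)` is `ξ_k` multiplied by the sign
`(-1)^ℓ S_1`, a function of `S_0, …, S_k`; a symmetric variable independent of the past stays
symmetric and independent of the past after such a sign flip. Hence `S_1, X̄_1, X̄_2, …` are i.i.d.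
signs: `T(S)` is again a simple random walk and `S_1` is independent of `σ(T(S))`. Applied to
`T^i(S)`, `T^i(S)_1` is independent of `σ(T^{i+1}(S))`, which contains all later `T^j(S)_1` and
`σ(T^n(S))`; this is the mutual independence. Finally `S_{k+1} = S_k + (-1)^ℓ S_1 X̄_k` recovers
`S_0, …, S_n` from `S_1, T(S)_1, …, T^{n-1}(S)_1`, which gives the independence of the past.
-/

section Independence

variable {Ω ι : Type*} {mΩ : MeasurableSpace Ω} {μ : Measure Ω} [IsProbabilityMeasure μ]

theorem iIndep_of_indep_biSup_lt [LinearOrder ι] {m : ι → MeasurableSpace Ω}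
    (h : ∀ i, Indep (⨆ j < i, m j) (m i) μ) : iIndep m μ := by
  classical
  refine (iIndep_iff m μ).2 fun s f hf => ?_
  induction s using Finset.induction_on_max with
  | empty => simp
  | insert a s hlt ih =>
    have hs : MeasurableSet[⨆ j < a, m j] (⋂ i ∈ s, f i) :=
      Finset.measurableSet_biInter s fun i hi => le_iSup₂ (f := fun j (_ : j < a) => m j) i
        (hlt i hi) _ (hf i (Finset.mem_insert_of_mem hi))
    rw [Finset.set_biInter_insert, Finset.prod_insert fun ha => (hlt a ha).false, Set.inter_comm,
      (Indep_iff _ _ μ).1 (h a) _ _ hs (hf a (Finset.mem_insert_self a s)),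
      ih fun i hi => hf i (Finset.mem_insert_of_mem hi), mul_comm]

theorem iIndep_of_indep_biSup_gt [LinearOrder ι] {m : ι → MeasurableSpace Ω}
    (h : ∀ i, Indep (m i) (⨆ j > i, m j) μ) : iIndep m μ :=
  iIndep_of_indep_biSup_lt (ι := ιᵒᵈ) fun i => (h (OrderDual.ofDual i)).symm

variable {G A : ℕ → MeasurableSpace Ω}

theorem iIndep_fin_of_antitone (hG : Antitone G) (hA : ∀ i, A i ≤ G i)
    (hind : ∀ i, Indep (A i) (G (i + 1)) μ) (n : ℕ) :
    iIndep (fun i : Fin (n + 1) => if (i : ℕ) < n then A i else G n) μ := by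
  refine iIndep_of_indep_biSup_gt fun i => ?_
  by_cases hi : (i : ℕ) < n
  · rw [if_pos hi]
    refine indep_of_indep_of_le_right (hind i) (iSup₂_le fun j hj => ?_)
    have hij : (i : ℕ) + 1 ≤ j := hj
    split_ifs
    · exact (hA j).trans (hG hij)
    · exact hG (by omega)
  · have hbot : (⨆ j > i, if (j : ℕ) < n then A j else G n) = ⊥ :=
      le_bot_iff.1 (iSup₂_le fun j hj => absurd (Fin.lt_def.1 hj) (by omega))
    rw [hbot]
    exact indep_bot_right _

theorem indep_biSup_lt_of_antitone (hG : Antitone G) (hA : ∀ i, A i ≤ G i)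
    (hind : ∀ i, Indep (A i) (G (i + 1)) μ) (hG0 : G 0 ≤ mΩ) (n : ℕ) :
    Indep (G n) (⨆ i < n, A i) μ := by
  have hle (i : ℕ) : A i ≤ mΩ := ((hA i).trans (hG (Nat.zero_le i))).trans hG0
  have h := indep_iSup_of_disjoint (fun i : Fin (n + 1) => by
      split_ifs
      exacts [hle i, (hG (Nat.zero_le n)).trans hG0])
    (iIndep_fin_of_antitone hG hA hind n) (S := {Fin.last n}) (T := {i | (i : ℕ) < n}) (by simp)
  rw [iSup_singleton, if_neg (by simp)] at h
  refine indep_of_indep_of_le_right h (iSup₂_le fun i hi => ?_)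
  exact le_iSup₂_of_le (⟨i, by omega⟩ : Fin (n + 1)) (show i < n from hi) (by simp [hi])

end Independence

-- `F` is bound before `mΩ` so that instance search picks the ambient σ-algebra `mΩ`.
theorem indep_mul_of_indep_of_map_neg {Ω : Type*} {F : MeasurableSpace Ω}
    [mΩ : MeasurableSpace Ω] {μ : Measure Ω} [IsProbabilityMeasure μ] {ε ξ : Ω → ℤ} (hF : F ≤ mΩ)
    (hε : Measurable[F] ε) (hε_unit : ∀ ω, IsUnit (ε ω)) (hξ : Measurable ξ)
    (hind : Indep F (MeasurableSpace.comap ξ inferInstance) μ) (hsymm : μ.map (-ξ) = μ.map ξ) :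
    Indep F (MeasurableSpace.comap (ε * ξ) inferInstance) μ ∧ μ.map (ε * ξ) = μ.map ξ := by
  set t := {ω | ε ω = 1}
  have ht : MeasurableSet[F] t := hε (measurableSet_singleton 1)
  have key (A : Set Ω) (B : Set ℤ) (hA : MeasurableSet[F] A) (hB : MeasurableSet B) :
      μ (A ∩ (ε * ξ) ⁻¹' B) = μ A * μ (ξ ⁻¹' B) := by
    have hsplit : A ∩ (ε * ξ) ⁻¹' B = A ∩ t ∩ ξ ⁻¹' B ∪ (A \ t) ∩ (-ξ) ⁻¹' B := by
      ext ω
      rcases Int.isUnit_iff.1 (hε_unit ω) with h | h <;> simp [t, h]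
    have hdisj : Disjoint (A ∩ t ∩ ξ ⁻¹' B) ((A \ t) ∩ (-ξ) ⁻¹' B) :=
      Set.disjoint_sdiff_inter.symm.mono Set.inter_subset_left Set.inter_subset_left
    calc μ (A ∩ (ε * ξ) ⁻¹' B)
        = μ (A ∩ t) * μ (ξ ⁻¹' B) + μ (A \ t) * μ ((-ξ) ⁻¹' B) := by
          rw [hsplit, measure_union hdisj ((hF _ (hA.diff ht)).inter (hξ.neg hB)),
            (Indep_iff _ _ μ).1 hind _ _ (hA.inter ht) ⟨B, hB, rfl⟩,
            (Indep_iff _ _ μ).1 hind (A \ t) ((-ξ) ⁻¹' B) (hA.diff ht)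
              ⟨Neg.neg ⁻¹' B, measurable_neg hB, rfl⟩]
      _ = μ A * μ (ξ ⁻¹' B) := by
          rw [← Measure.map_apply hξ.neg hB, hsymm, Measure.map_apply hξ hB, ← add_mul,
            measure_inter_add_sdiff _ (hF _ ht)]
  have hεξ : Measurable (ε * ξ) := (hε.mono hF le_rfl).mul hξ
  have hlaw : μ.map (ε * ξ) = μ.map ξ := Measure.ext fun B hB => by
    rw [Measure.map_apply hεξ hB, Measure.map_apply hξ hB, ← Set.univ_inter ((ε * ξ) ⁻¹' B),
      key _ _ MeasurableSet.univ hB, measure_univ, one_mul]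
  refine ⟨(Indep_iff _ _ μ).2 ?_, hlaw⟩
  rintro A _ hA ⟨B, hB, rfl⟩
  rw [key A B hA hB, ← Measure.map_apply hξ hB, ← hlaw, Measure.map_apply hεξ hB]

theorem measurable_of_dependsOn {Ω ι α β : Type*} {m : MeasurableSpace Ω} [MeasurableSpace α]
    [Countable α] [MeasurableSingletonClass α] [MeasurableSpace β] [Nonempty β]
    {X : Ω → ι → α} {F : (ι → α) → β} {s : Set ι} [Finite s] (hF : DependsOn F s)
    (hX : ∀ i ∈ s, Measurable[m] fun ω => X ω i) : Measurable[m] fun ω => F (X ω) := by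
  obtain ⟨g, rfl⟩ := dependsOn_iff_exists_comp.1 hF
  exact (measurable_of_countable g).comp (measurable_pi_lambda _ fun i => hX i i.2)

theorem dependsOn_cvEll (j : ℕ) : DependsOn (fun S : ℕ → ℤ => cvEll S j) (Set.Iic j) := by
  intro S S' h
  simp only [cvEll]
  congr 1
  refine Finset.filter_congr fun i hi => ?_
  rw [Finset.mem_range] at hi
  rw [h (i - 1) (Set.mem_Iic.2 (by omega)), h (i + 1) (Set.mem_Iic.2 hi)]

theorem dependsOn_cvBarX (j : ℕ) :
    DependsOn (fun S : ℕ → ℤ => cvBarX S j) (Set.Iic (j + 1)) := by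
  intro S S' h
  simp only [cvBarX, inc, dependsOn_cvEll j fun i hi => h i (Set.Iic_subset_Iic.2 j.le_succ hi),
    h 1 (by simp), h 0 (by simp), h (j + 1) (by simp), h (j + 1 - 1) (by simp)]

theorem dependsOn_CV (k : ℕ) : DependsOn (fun S : ℕ → ℤ => CV S k) (Set.Iic (k + 1)) := by
  intro S S' h
  refine Finset.sum_congr rfl fun j hj => dependsOn_cvBarX (j + 1) fun i hi => h i ?_
  simp only [Finset.mem_range, Set.mem_Iic] at hj hi ⊢
  omega

theorem dependsOn_CViter (n k : ℕ) :
    DependsOn (fun S : ℕ → ℤ => CViter n S k) (Set.Iic (k + n)) := by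
  induction n generalizing k with
  | zero => exact fun S S' h => h k (Set.mem_Iic.2 le_rfl)
  | succ n ih =>
    refine fun S S' h => dependsOn_CV k fun i hi => ih i fun i' hi' => h i' ?_
    simp only [Set.mem_Iic] at hi hi' ⊢
    omega

theorem CV_succ_sub_CV (S : ℕ → ℤ) (j : ℕ) : CV S (j + 1) - CV S j = cvBarX S (j + 1) := by
  simp [CV, Finset.sum_range_succ]

theorem CViter_add (a b : ℕ) (S : ℕ → ℤ) : CViter (a + b) S = CViter a (CViter b S) := by
  induction a with
  | zero => simp [CViter]
  | succ a ih => rw [Nat.succ_add, CViter, ih, CViter]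

theorem CViter_succ' (n : ℕ) (S : ℕ → ℤ) : CViter (n + 1) S = CViter n (CV S) :=
  CViter_add n 1 S

theorem inc_succ_eq_mul_cvBarX {S : ℕ → ℤ} (h1 : IsUnit (inc S 1)) (j : ℕ) :
    inc S (j + 1) = (-1) ^ cvEll S j * inc S 1 * cvBarX S j := by
  have hsign : ((-1 : ℤ) ^ cvEll S j) * (-1) ^ cvEll S j = 1 := by
    rw [← pow_add, ← two_mul, pow_mul, neg_one_sq, one_pow]
  have h1' : inc S 1 * inc S 1 = 1 := Int.isUnit_mul_self h1
  rw [cvBarX]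
  linear_combination (-(inc S 1 * inc S 1) * inc S (j + 1)) * hsign - inc S (j + 1) * h1'

def IsSRWPath (S : ℕ → ℤ) : Prop := S 0 = 0 ∧ ∀ i, IsUnit (S (i + 1) - S i)

theorem IsSRWPath.isUnit_cvBarX {S : ℕ → ℤ} (hS : IsSRWPath S) (j : ℕ) :
    IsUnit (cvBarX S (j + 1)) :=
  (((isUnit_neg_one (α := ℤ)).pow _).mul (hS.2 0)).mul (hS.2 (j + 1))

theorem IsSRWPath.CV {S : ℕ → ℤ} (hS : IsSRWPath S) : IsSRWPath (CV S) :=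
  ⟨by simp [_root_.CV], fun i => by rw [CV_succ_sub_CV]; exact hS.isUnit_cvBarX i⟩

section Reconstruction

variable {Ω : Type*} {S : Ω → ℕ → ℤ}

theorem measurable_past_of_dependsOn {β : Type*} [MeasurableSpace β] [Nonempty β]
    {F : (ℕ → ℤ) → β} {N k : ℕ} (hF : DependsOn F (Set.Iic N)) (hNk : N ≤ k) :
    Measurable[⨆ i ∈ Set.Iic k, MeasurableSpace.comap (fun ω => S ω i) inferInstance]
      fun ω => F (S ω) :=
  measurable_of_dependsOn hF fun i hi => Measurable.of_comap_le (le_iSup₂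
    (f := fun i (_ : i ∈ Set.Iic k) => MeasurableSpace.comap (fun ω => S ω i) inferInstance) i
    (le_trans hi hNk))

theorem measurable_CViter {m : MeasurableSpace Ω} (hS : ∀ i, Measurable[m] fun ω => S ω i)
    (n k : ℕ) : Measurable[m] fun ω => CViter n (S ω) k :=
  measurable_of_dependsOn (dependsOn_CViter n k) fun i _ => hS i

theorem antitone_iSup_comap_CViter :
    Antitone fun n => ⨆ k, MeasurableSpace.comap (fun ω => CViter n (S ω) k) inferInstance := by
  intro a b hab
  refine iSup_le fun k => Measurable.comap_le ?_
  obtain ⟨c, rfl⟩ := Nat.exists_eq_add_of_le' hab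
  simp only [CViter_add]
  exact measurable_CViter (fun i => Measurable.of_comap_le (le_iSup
    (fun k => MeasurableSpace.comap (fun ω => CViter a (S ω) k) inferInstance) i)) c k

theorem iSup_comap_le_sup_iSup_comap_CV (hS : ∀ ω, IsSRWPath (S ω)) (n : ℕ) :
    ⨆ k ∈ Set.Iic (n + 1), MeasurableSpace.comap (fun ω => S ω k) inferInstance ≤
      MeasurableSpace.comap (fun ω => S ω 1) inferInstance ⊔
        ⨆ k ∈ Set.Iic n, MeasurableSpace.comap (fun ω => CV (S ω) k) inferInstance := by
  set m := MeasurableSpace.comap (fun ω => S ω 1) inferInstance ⊔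
    ⨆ k ∈ Set.Iic n, MeasurableSpace.comap (fun ω => CV (S ω) k) inferInstance
  have hCV (k : ℕ) (hk : k ≤ n) : Measurable[m] fun ω => CV (S ω) k :=
    Measurable.of_comap_le (le_sup_of_le_right (le_iSup₂
      (f := fun k (_ : k ∈ Set.Iic n) => MeasurableSpace.comap (fun ω => CV (S ω) k) inferInstance)
      k hk))
  have key (k : ℕ) : k ≤ n + 1 → Measurable[m] fun ω => S ω k := by
    induction k using Nat.strong_induction_on with | _ k ih =>
    intro hk
    match k with
    | 0 => simp only [fun ω => (hS ω).1, measurable_const]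
    | 1 => exact Measurable.of_comap_le le_sup_left
    | j + 2 =>
      have hstep (ω : Ω) : S ω (j + 2) = S ω (j + 1) +
          (-1) ^ cvEll (S ω) (j + 1) * S ω 1 * (CV (S ω) (j + 1) - CV (S ω) j) := by
        have h := inc_succ_eq_mul_cvBarX (S := S ω) ((hS ω).2 0) (j + 1)
        simp only [inc, (hS ω).1, sub_zero, Nat.add_sub_cancel, CV_succ_sub_CV] at h ⊢
        linarith
      have hℓ : Measurable[m] fun ω => cvEll (S ω) (j + 1) :=
        measurable_of_dependsOn (dependsOn_cvEll (j + 1)) fun i hi => ih i (by simp at hi; omega)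
          (by simp at hi; omega)
      simp only [hstep]
      exact (ih _ (by omega) (by omega)).add
        (((measurable_from_nat.comp hℓ).mul (ih 1 (by omega) (by omega))).mul
          ((hCV _ (by omega)).sub (hCV _ (by omega))))
  exact iSup₂_le fun k hk => (key k hk).comap_le

theorem iSup_comap_le_iSup_comap_CViter_one (hS : ∀ ω, IsSRWPath (S ω)) (n : ℕ) :
    ⨆ k ∈ Set.Iic n, MeasurableSpace.comap (fun ω => S ω k) inferInstance ≤
      ⨆ i < n, MeasurableSpace.comap (fun ω => CViter i (S ω) 1) inferInstance := by
  induction n generalizing S with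
  | zero =>
    refine iSup₂_le fun k hk => ?_
    obtain rfl : k = 0 := Nat.le_zero.1 hk
    simp only [fun ω => (hS ω).1, MeasurableSpace.comap_const, bot_le]
  | succ n ih =>
    rw [Nat.iSup_lt_succ']
    refine (iSup_comap_le_sup_iSup_comap_CV hS n).trans (sup_le_sup le_rfl ?_)
    simpa only [CViter_succ'] using ih fun ω => (hS ω).CV

end Reconstruction

def cvInc (S : ℕ → ℤ) : ℕ → ℤ
  | 0 => S 1
  | j + 1 => cvBarX S (j + 1)

theorem dependsOn_cvInc (j : ℕ) :
    DependsOn (fun S : ℕ → ℤ => cvInc S j) (Set.Iic (j + 1)) := by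
  cases j with
  | zero => exact fun S S' h => h 1 (Set.mem_Iic.2 le_rfl)
  | succ j => exact dependsOn_cvBarX (j + 1)

namespace IsSRW

variable {Ω : Type*} [MeasurableSpace Ω] {P : Measure Ω} {S : Ω → ℕ → ℤ}

theorem path (hS : IsSRW P S) (ω : Ω) : IsSRWPath (S ω) :=
  ⟨hS.1 ω, fun i => Int.isUnit_iff.2 (hS.2.1 ω i)⟩

theorem measurable_step (hS : IsSRW P S) (k : ℕ) : Measurable fun ω => S ω (k + 1) - S ω k :=
  (hS.2.2.1 _).sub (hS.2.2.1 _)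

theorem indep_past_step (hS : IsSRW P S) (k : ℕ) :
    Indep (⨆ i ∈ Set.Iic k, MeasurableSpace.comap (fun ω => S ω i) inferInstance)
      (MeasurableSpace.comap (fun ω => S ω (k + 1) - S ω k) inferInstance) P := by
  have h := indep_iSup_of_disjoint (fun j => (hS.measurable_step j).comap_le) hS.2.2.2.1
    (Set.disjoint_singleton_right.2 (lt_irrefl k) : Disjoint (Set.Iio k) {k})
  rw [iSup_singleton] at h
  refine indep_of_indep_of_le_left h (iSup₂_le fun i hi => Measurable.comap_le ?_)
  have hsum : (fun ω => S ω i) = fun ω => ∑ j ∈ Finset.range i, (S ω (j + 1) - S ω j) :=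
    funext fun ω => by rw [Finset.sum_range_sub, hS.1, sub_zero]
  rw [hsum]
  refine Finset.measurable_sum _ fun j hj => Measurable.of_comap_le (le_iSup₂
    (f := fun j (_ : j ∈ Set.Iio k) => MeasurableSpace.comap
      (fun ω => S ω (j + 1) - S ω j) inferInstance) j ?_)
  simp only [Finset.mem_range, Set.mem_Iio, Set.mem_Iic] at hj hi ⊢
  omega

theorem map_neg_step (hS : IsSRW P S) (k : ℕ) :
    P.map (-fun ω => S ω (k + 1) - S ω k) = P.map fun ω => S ω (k + 1) - S ω k := by
  have hmeas := hS.measurable_step k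
  refine Measure.ext_of_singleton fun z => ?_
  rw [Measure.map_apply hmeas.neg (measurableSet_singleton z),
    Measure.map_apply hmeas (measurableSet_singleton z)]
  have hpre : (-fun ω => S ω (k + 1) - S ω k) ⁻¹' {z} =
      (fun ω => S ω (k + 1) - S ω k) ⁻¹' {-z} := by
    ext ω
    simp only [Set.mem_preimage, Pi.neg_apply, Set.mem_singleton_iff]
    omega
  have hempty (w : ℤ) (hw : ¬(w = 1 ∨ w = -1)) : (fun ω => S ω (k + 1) - S ω k) ⁻¹' {w} = ∅ :=
    Set.eq_empty_of_forall_notMem fun ω hω => hw (Set.mem_singleton_iff.1 hω ▸ hS.2.1 ω k)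
  rw [hpre]
  by_cases hz : z = 1 ∨ z = -1
  · rcases hz with rfl | rfl
    · exact (hS.2.2.2.2.2 k).trans (hS.2.2.2.2.1 k).symm
    · exact (hS.2.2.2.2.1 k).trans (hS.2.2.2.2.2 k).symm
  · rw [hempty z hz, hempty (-z) (by omega)]

theorem indep_past_cvBarX [IsProbabilityMeasure P] (hS : IsSRW P S) (k : ℕ) :
    Indep (⨆ i ∈ Set.Iic (k + 1), MeasurableSpace.comap (fun ω => S ω i) inferInstance)
        (MeasurableSpace.comap (fun ω => cvBarX (S ω) (k + 1)) inferInstance) P ∧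
      P.map (fun ω => cvBarX (S ω) (k + 1)) = P.map fun ω => S ω (k + 2) - S ω (k + 1) := by
  have hsign : DependsOn (fun S : ℕ → ℤ => (-1) ^ cvEll S (k + 1) * inc S 1) (Set.Iic (k + 1)) :=
    fun S S' h => by
      simp only [inc, dependsOn_cvEll (k + 1) h, h 1 (by simp), h 0 (by simp)]
  exact indep_mul_of_indep_of_map_neg (iSup₂_le fun i _ => (hS.2.2.1 i).comap_le)
    (measurable_past_of_dependsOn hsign le_rfl)
    (fun ω => ((isUnit_neg_one.pow _).mul ((hS.path ω).2 0))) (hS.measurable_step _)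
    (hS.indep_past_step _) (hS.map_neg_step _)

theorem iIndepFun_cvInc [IsProbabilityMeasure P] (hS : IsSRW P S) :
    iIndepFun (fun k ω => cvInc (S ω) k) P := by
  refine (iIndepFun_iff_iIndep _ _ _).2 (iIndep_of_indep_biSup_lt fun k => ?_)
  cases k with
  | zero =>
    simp only [not_lt_zero, iSup_false, iSup_bot]
    exact indep_bot_left _
  | succ k =>
    refine indep_of_indep_of_le_left (hS.indep_past_cvBarX k).1
      (iSup₂_le fun j hj => Measurable.comap_le ?_)
    exact measurable_past_of_dependsOn (dependsOn_cvInc j) (by omega)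

theorem indep_comap_one_iSup_comap_CV [IsProbabilityMeasure P] (hS : IsSRW P S) :
    Indep (MeasurableSpace.comap (fun ω => S ω 1) inferInstance)
      (⨆ k, MeasurableSpace.comap (fun ω => CV (S ω) k) inferInstance) P := by
  have hmeas (j : ℕ) : Measurable fun ω => cvInc (S ω) j :=
    measurable_of_dependsOn (dependsOn_cvInc j) fun i _ => hS.2.2.1 i
  have h := indep_iSup_of_disjoint (fun j => (hmeas j).comap_le) hS.iIndepFun_cvInc
    (disjoint_compl_right (a := ({0} : Set ℕ)))
  rw [iSup_singleton] at h
  refine indep_of_indep_of_le_right h (iSup_le fun k => Measurable.comap_le ?_)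
  exact Finset.measurable_sum (f := fun j ω => cvInc (S ω) (j + 1)) (Finset.range k)
    fun j _ => Measurable.of_comap_le (le_iSup₂ (f := fun j (_ : j ∈ ({0} : Set ℕ)ᶜ) =>
      MeasurableSpace.comap (fun ω => cvInc (S ω) j) inferInstance) (j + 1) (by simp))

end IsSRW

section

variable {Ω : Type*} [MeasurableSpace Ω] {P : Measure Ω} [IsProbabilityMeasure P]
  {S : Ω → ℕ → ℤ}

theorem isSRW_CV (hS : IsSRW P S) : IsSRW P fun ω => CV (S ω) := by
  have hlaw (i : ℕ) (z : ℤ) : P {ω | CV (S ω) (i + 1) - CV (S ω) i = z} =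
      P {ω | S ω (i + 1 + 1) - S ω (i + 1) = z} := by
    have h := Measure.ext_iff_singleton.1 (hS.indep_past_cvBarX i).2 z
    rw [Measure.map_apply (measurable_of_dependsOn (dependsOn_cvBarX _) fun i _ => hS.2.2.1 i)
      (measurableSet_singleton z), Measure.map_apply (hS.measurable_step _)
      (measurableSet_singleton z)] at h
    simp only [CV_succ_sub_CV]
    exact h
  refine ⟨fun ω => (hS.path ω).CV.1, fun ω i => Int.isUnit_iff.1 ((hS.path ω).CV.2 i),
    fun k => measurable_CViter hS.2.2.1 1 k, ?_, fun i => (hlaw i 1).trans (hS.2.2.2.2.1 _),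
    fun i => (hlaw i (-1)).trans (hS.2.2.2.2.2 _)⟩
  simp only [CV_succ_sub_CV]
  exact (hS.iIndepFun_cvInc.precomp Nat.succ_injective :)

theorem isSRW_CViter (hS : IsSRW P S) (n : ℕ) : IsSRW P fun ω => CViter n (S ω) := by
  induction n with
  | zero => exact hS
  | succ n ih => exact isSRW_CV ih

end

/-- `σ(T^n(S))` and `σ(S_k, k ≤ n)` are independent; in particular
`S_1, T(S)_1, …, T^{n-1}(S)_1` and the process `T^n(S)` are mutually independent. -/
theorem cviter_indep_past {Ω : Type*} [MeasurableSpace Ω] (P : Measure Ω)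
    [IsProbabilityMeasure P] (S : Ω → ℕ → ℤ) (hS : IsSRW P S) (n : ℕ) :
    Indep (⨆ k : ℕ, MeasurableSpace.comap (fun ω => CViter n (S ω) k) inferInstance)
        (⨆ k ∈ Set.Iic n, MeasurableSpace.comap (fun ω => S ω k) inferInstance) P ∧
      iIndep (fun i : Fin (n + 1) =>
        if (i : ℕ) < n then
          MeasurableSpace.comap (fun ω => CViter (i : ℕ) (S ω) 1) inferInstance
        else
          ⨆ k : ℕ, MeasurableSpace.comap (fun ω => CViter n (S ω) k) inferInstance) P := by
  have hG := antitone_iSup_comap_CViter (S := S)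
  have hA (i : ℕ) : MeasurableSpace.comap (fun ω => CViter i (S ω) 1) inferInstance ≤
      ⨆ k, MeasurableSpace.comap (fun ω => CViter i (S ω) k) inferInstance :=
    le_iSup (fun k => MeasurableSpace.comap (fun ω => CViter i (S ω) k) inferInstance) 1
  have hind (i : ℕ) := (isSRW_CViter hS i).indep_comap_one_iSup_comap_CV
  have hG0 : ⨆ k, MeasurableSpace.comap (fun ω => CViter 0 (S ω) k) inferInstance ≤ ‹_› :=
    iSup_le fun k => (hS.2.2.1 k).comap_le
  exact ⟨indep_of_indep_of_le_right (indep_biSup_lt_of_antitone hG hA hind hG0 n)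
    (iSup_comap_le_iSup_comap_CViter_one hS.path n), iIndep_fin_of_antitone hG hA hind n⟩

end
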